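/- arXiv:2302.00173 — 4 statements merged into one kernel-verified Lean document; each statement's English description precedes it below -/
import Mathlib

section
/- With β₁ = 3√(2 ln 2)/π, for all x in the interval [0, π/3], |cos(x)| ≥ exp(-β₁² x² / 2). -/
open Real

/-! The function `y ↦ log (cos y) / y ^ 2` is decreasing on `(0, π / 2)`: the numerator of its
derivative is `-y (y tan y + 2 log (cos y))`, and the bracket vanishes at `0` and has derivative
`y / cos² y - tan y ≥ 0` since `sin y cos y = sin (2y) / 2 ≤ y`. Comparing with its value
`-9 log 2 / π²` at `π / 3`, where `cos = 1 / 2`, gives `log (cos x) ≥ -(9 log 2 / π²) x² = -β₁² x² / 2`. -/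

namespace Real

lemma cos_pos_of_mem_Ico_zero_pi_div_two {y : ℝ} (hy : y ∈ Set.Ico 0 (π / 2)) : 0 < cos y :=
  cos_pos_of_mem_Ioo ⟨by linarith [pi_pos, hy.1], hy.2⟩

lemma hasDerivAt_mul_tan_add_two_mul_log_cos {y : ℝ} (hy : cos y ≠ 0) :
    HasDerivAt (fun y => y * tan y + 2 * log (cos y)) (y / cos y ^ 2 - tan y) y := by
  refine (((hasDerivAt_id y).mul (hasDerivAt_tan hy)).add
    (((hasDerivAt_cos y).log hy).const_mul 2)).congr_deriv ?_
  rw [id, tan_eq_sin_div_cos]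
  field_simp
  ring

lemma mul_tan_add_two_mul_log_cos_nonneg {y : ℝ} (hy : y ∈ Set.Ico 0 (π / 2)) :
    0 ≤ y * tan y + 2 * log (cos y) := by
  have hcos : ∀ z ∈ Set.Ico 0 (π / 2), cos z ≠ 0 := fun z hz =>
    (cos_pos_of_mem_Ico_zero_pi_div_two hz).ne'
  have hmono : MonotoneOn (fun y => y * tan y + 2 * log (cos y)) (Set.Ico 0 (π / 2)) := by
    refine monotoneOn_of_hasDerivWithinAt_nonneg (f' := fun y => y / cos y ^ 2 - tan y)
      (convex_Ico _ _) ?_ ?_ ?_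
    · exact continuousOn_id.mul (continuousOn_tan.mono hcos) |>.add
        (continuousOn_const.mul (continuousOn_cos.log hcos))
    · intro z hz
      rw [interior_Ico] at hz
      exact (hasDerivAt_mul_tan_add_two_mul_log_cos
        (hcos z (Set.Ioo_subset_Ico_self hz))).hasDerivWithinAt
    · intro z hz
      rw [interior_Ico] at hz
      have hc := cos_pos_of_mem_Ico_zero_pi_div_two (Set.Ioo_subset_Ico_self hz)
      have hsc : sin z * cos z ≤ z := by
        have hsin := sin_le (by linarith [hz.1] : 0 ≤ 2 * z)
        rw [sin_two_mul] at hsin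
        linarith
      rw [tan_eq_sin_div_cos, sub_nonneg, div_le_div_iff₀ hc (by positivity)]
      nlinarith
  simpa using hmono ⟨le_rfl, by positivity⟩ hy hy.1

lemma hasDerivAt_log_cos_div_sq {y : ℝ} (hy : y ≠ 0) (hc : cos y ≠ 0) :
    HasDerivAt (fun y => log (cos y) / y ^ 2)
      (-(y * tan y + 2 * log (cos y)) / y ^ 3) y := by
  refine (((hasDerivAt_cos y).log hc).div (hasDerivAt_pow 2 y) (pow_ne_zero 2 hy)).congr_deriv ?_
  rw [tan_eq_sin_div_cos]
  field_simp
  ring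

lemma antitoneOn_log_cos_div_sq :
    AntitoneOn (fun y => log (cos y) / y ^ 2) (Set.Ioo 0 (π / 2)) := by
  have hcos : ∀ z ∈ Set.Ioo 0 (π / 2), cos z ≠ 0 := fun z hz =>
    (cos_pos_of_mem_Ico_zero_pi_div_two (Set.Ioo_subset_Ico_self hz)).ne'
  refine antitoneOn_of_hasDerivWithinAt_nonpos
    (f' := fun y => -(y * tan y + 2 * log (cos y)) / y ^ 3) (convex_Ioo _ _) ?_ ?_ ?_
  · exact (continuousOn_cos.log hcos).div (continuousOn_pow 2) fun z hz =>
    pow_ne_zero 2 hz.1.ne'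
  · intro z hz
    rw [interior_Ioo] at hz
    exact (hasDerivAt_log_cos_div_sq hz.1.ne' (hcos z hz)).hasDerivWithinAt
  · intro z hz
    rw [interior_Ioo] at hz
    have hbracket := mul_tan_add_two_mul_log_cos_nonneg (Set.Ioo_subset_Ico_self hz)
    have hz0 := hz.1
    rw [neg_div]
    exact neg_nonpos.mpr (by positivity)

lemma log_cos_div_sq_mul_sq_le_log_cos {x a : ℝ} (hx : 0 ≤ x) (hxa : x ≤ a) (ha : a < π / 2) :
    log (cos a) / a ^ 2 * x ^ 2 ≤ log (cos x) := by
  rcases hx.eq_or_lt with rfl | hx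
  · simp
  have hanti := antitoneOn_log_cos_div_sq ⟨hx, hxa.trans_lt ha⟩ ⟨hx.trans_le hxa, ha⟩ hxa
  simpa [div_mul_cancel₀, hx.ne'] using mul_le_mul_of_nonneg_right hanti (sq_nonneg x)

end Real

theorem abs_cos_ge_gaussian (x : ℝ) (hx0 : 0 ≤ x) (hx1 : x ≤ π / 3) :
    Real.exp (-((3 * Real.sqrt (2 * Real.log 2) / π) ^ 2 * x ^ 2 / 2)) ≤ |Real.cos x| := by
  have hcos : 0 < cos x := cos_pos_of_mem_Ico_zero_pi_div_two ⟨hx0, by linarith [pi_pos]⟩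
  have hexponent :
      -((3 * √(2 * log 2) / π) ^ 2 * x ^ 2 / 2) = log (cos (π / 3)) / (π / 3) ^ 2 * x ^ 2 := by
    rw [cos_pi_div_three, one_div, log_inv, div_pow, mul_pow, sq_sqrt (by positivity)]
    field_simp
  rw [hexponent, abs_of_pos hcos, ← exp_log hcos, exp_le_exp]
  exact log_cos_div_sq_mul_sq_le_log_cos hx0 hx1 (by linarith [pi_pos])
end

section
/- With β₂ = 3√3/π, for all real x ≥ 0 and all y with 0 ≤ y ≤ π/3, arctan(tanh(x) · tan(y)) ≤ β₂ · x · y. -/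
/-!
Bound each factor linearly: `arctan t ≤ t` for `t ≥ 0`, `tanh x ≤ x` for `x ≥ 0`, and, since `tan`
is convex on `[0, π/2)` and vanishes at `0`, it lies below its chord on `[0, π/3]`, whose slope is
`tan (π/3) / (π/3) = 3√3/π`.
-/

open Real Set

namespace Real

lemma arctan_le_self {t : ℝ} (ht : 0 ≤ t) : arctan t ≤ t := by
  simpa only [tan_arctan] using le_tan (arctan_nonneg.mpr ht) (arctan_lt_pi_div_two t)

lemma tanh_nonneg {x : ℝ} (hx : 0 ≤ x) : 0 ≤ tanh x := by
  rw [tanh_eq_sinh_div_cosh]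
  exact div_nonneg (sinh_nonneg_iff.mpr hx) (cosh_pos x).le

lemma sinh_le_mul_cosh {x : ℝ} (hx : 0 ≤ x) : sinh x ≤ x * cosh x := by
  let g : ℝ → ℝ := fun t ↦ t * cosh t - sinh t
  have hg : ∀ t, HasDerivAt g (t * sinh t) t := fun t ↦
    (((hasDerivAt_id' t).mul (hasDerivAt_cosh t)).sub (hasDerivAt_sinh t)).congr_deriv (by ring)
  have hmono : MonotoneOn g (Ici 0) :=
    monotoneOn_of_hasDerivWithinAt_nonneg (convex_Ici 0)
      (fun t _ ↦ (hg t).continuousAt.continuousWithinAt)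
      (fun t _ ↦ (hg t).hasDerivWithinAt)
      (fun t ht ↦ by
        rw [interior_Ici] at ht
        exact mul_nonneg ht.le (sinh_nonneg_iff.mpr ht.le))
  have hg_nonneg := hmono self_mem_Ici hx hx
  simp only [g, zero_mul, sinh_zero, sub_zero] at hg_nonneg
  linarith

lemma tanh_le_self {x : ℝ} (hx : 0 ≤ x) : tanh x ≤ x := by
  rw [tanh_eq_sinh_div_cosh, div_le_iff₀ (cosh_pos x)]
  exact sinh_le_mul_cosh hx

lemma convexOn_tan : ConvexOn ℝ (Ico 0 (π / 2)) tan := by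
  have hcos : ∀ t ∈ Ioo 0 (π / 2), 0 < cos t := fun t ht ↦
    cos_pos_of_mem_Ioo ⟨by linarith [ht.1, pi_pos], ht.2⟩
  refine MonotoneOn.convexOn_of_deriv (convex_Ico 0 (π / 2))
    (continuousOn_tan_Ioo.mono fun t ht ↦ ⟨by linarith [ht.1, pi_pos], ht.2⟩) ?_ ?_
  · rw [interior_Ico]
    exact fun t ht ↦ (differentiableAt_tan.mpr (hcos t ht).ne').differentiableWithinAt
  · rw [interior_Ico]
    intro a ha b hb hab
    rw [deriv_tan, deriv_tan]
    have hcos_le : cos b ≤ cos a :=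
      cos_le_cos_of_nonneg_of_le_pi ha.1.le (by linarith [hb.2, pi_pos]) hab
    exact one_div_le_one_div_of_le (pow_pos (hcos b hb) 2)
      (pow_le_pow_left₀ (hcos b hb).le hcos_le 2)

lemma tan_le_tan_div_mul {a y : ℝ} (hy : 0 ≤ y) (hya : y ≤ a) (ha : a < π / 2) :
    tan y ≤ tan a / a * y := by
  obtain rfl | ha0 := (hy.trans hya).eq_or_lt
  · simp [le_antisymm hya hy]
  set s := y / a
  have hs0 : 0 ≤ s := div_nonneg hy ha0.le
  have hs1 : s ≤ 1 := (div_le_one ha0).mpr hya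
  have hy_eq : (1 - s) • (0 : ℝ) + s • a = y := by
    simp only [smul_eq_mul, mul_zero, zero_add, s]
    field_simp
  have hchord := convexOn_tan.2 ⟨le_rfl, by positivity⟩ ⟨ha0.le, ha⟩ (sub_nonneg.mpr hs1) hs0
    (sub_add_cancel 1 s)
  rw [hy_eq, smul_eq_mul, smul_eq_mul, tan_zero] at hchord
  calc tan y ≤ (1 - s) * 0 + s * tan a := hchord
    _ = tan a / a * y := by simp only [s]; ring

lemma tan_le_mul_of_le_pi_div_three {y : ℝ} (hy0 : 0 ≤ y) (hy1 : y ≤ π / 3) :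
    tan y ≤ 3 * √3 / π * y := by
  have hchord := tan_le_tan_div_mul hy0 hy1 (by linarith [pi_pos])
  rwa [tan_pi_div_three, div_div_eq_mul_div, mul_comm √3] at hchord

end Real

theorem arctan_tanh_tan_le (x y : ℝ) (hx : 0 ≤ x) (hy0 : 0 ≤ y) (hy1 : y ≤ π / 3) :
    Real.arctan (Real.tanh x * Real.tan y) ≤ (3 * Real.sqrt 3 / π) * x * y := by
  have htan : 0 ≤ tan y := tan_nonneg_of_nonneg_of_le_pi_div_two hy0 (by linarith [pi_pos])
  calc arctan (tanh x * tan y)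
      ≤ tanh x * tan y := arctan_le_self (mul_nonneg (tanh_nonneg hx) htan)
    _ ≤ x * (3 * √3 / π * y) :=
      mul_le_mul (tanh_le_self hx) (tan_le_mul_of_le_pi_div_three hy0 hy1) htan hx
    _ = 3 * √3 / π * x * y := by ring
end

section
/- With β₂ = 3√3/π, for all real x ≥ 0 and all y with 0 ≤ y ≤ π/3, arctan(tanh(x) · tan(y)) ≤ β₂ · tanh(x) · y. -/
open Real

lemma tan_convexOn : ConvexOn ℝ (Set.Icc 0 (π/3)) Real.tan := by
  have hsub : Set.Icc (0:ℝ) (π/3) ⊆ Set.Ioo (-(π/2)) (π/2) := by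
    intro z hz
    have hπ := Real.pi_pos
    constructor <;> [nlinarith [hz.1]; nlinarith [hz.2]]
  apply MonotoneOn.convexOn_of_deriv (convex_Icc _ _)
  · exact fun z hz => (Real.continuousAt_tan.mpr
      (Real.cos_pos_of_mem_Ioo (hsub hz)).ne').continuousWithinAt
  · intro z hz
    rw [interior_Icc] at hz
    exact (Real.differentiableAt_tan.mpr
      (Real.cos_pos_of_mem_Ioo (hsub (Set.Ioo_subset_Icc_self hz))).ne').differentiableWithinAt
  · rw [interior_Icc]
    intro a ha b hb hab
    rw [Real.deriv_tan, Real.deriv_tan]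
    have hπ := Real.pi_pos
    have hca : 0 < Real.cos a := Real.cos_pos_of_mem_Ioo (hsub (Set.Ioo_subset_Icc_self ha))
    have hcb : 0 < Real.cos b := Real.cos_pos_of_mem_Ioo (hsub (Set.Ioo_subset_Icc_self hb))
    have hle : Real.cos b ≤ Real.cos a := by
      apply Real.cos_le_cos_of_nonneg_of_le_pi ha.1.le (by nlinarith [hb.2]) hab
    have : Real.cos b ^ 2 ≤ Real.cos a ^ 2 := by nlinarith
    exact one_div_le_one_div_of_le (by positivity) this

lemma tan_le_lin {y : ℝ} (hy0 : 0 ≤ y) (hy1 : y ≤ π / 3) :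
    Real.tan y ≤ (3 * Real.sqrt 3 / π) * y := by
  have hπ := Real.pi_pos
  set lam : ℝ := y / (π/3) with hlam
  have hl0 : 0 ≤ lam := by positivity
  have hl1 : lam ≤ 1 := by rw [hlam, div_le_one (by positivity)]; exact hy1
  have h := tan_convexOn.2 (Set.left_mem_Icc.mpr (by positivity))
    (Set.right_mem_Icc.mpr (by positivity))
    (show (0:ℝ) ≤ 1 - lam by linarith) hl0 (by ring)
  have hyeq : (1 - lam) • (0:ℝ) + lam • (π/3) = y := by
    simp [hlam]
  rw [hyeq] at h
  rw [Real.tan_zero, smul_zero, zero_add, Real.tan_pi_div_three, smul_eq_mul, hlam] at h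
  have hπ' : π ≠ 0 := hπ.ne'
  calc Real.tan y ≤ y / (π/3) * Real.sqrt 3 := h
    _ = 3 * Real.sqrt 3 / π * y := by field_simp

lemma arctan_le_self' {u : ℝ} (hu : 0 ≤ u) : Real.arctan u ≤ u := by
  rcases eq_or_lt_of_le hu with h | h
  · simp [← h]
  · have h1 : 0 < Real.arctan u := by rw [← Real.arctan_zero]; exact Real.arctan_strictMono h
    have h2 := Real.lt_tan h1 (Real.arctan_lt_pi_div_two u)
    rw [Real.tan_arctan] at h2
    exact h2.le

theorem arctan_tanh_tan_le_tanh (x y : ℝ) (hx : 0 ≤ x) (hy0 : 0 ≤ y) (hy1 : y ≤ π / 3) :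
    Real.arctan (Real.tanh x * Real.tan y) ≤ (3 * Real.sqrt 3 / π) * Real.tanh x * y := by
  have hπ := Real.pi_pos
  have ht0 : 0 ≤ Real.tanh x := by
    rw [Real.tanh_eq_sinh_div_cosh]
    exact div_nonneg (Real.sinh_nonneg_iff.mpr hx) (Real.cosh_pos x).le
  have htan0 : 0 ≤ Real.tan y :=
    Real.tan_nonneg_of_nonneg_of_le_pi_div_two hy0 (by linarith)
  calc Real.arctan (Real.tanh x * Real.tan y) ≤ Real.tanh x * Real.tan y :=
        arctan_le_self' (by positivity)
    _ ≤ Real.tanh x * ((3 * Real.sqrt 3 / π) * y) :=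
        mul_le_mul_of_nonneg_left (tan_le_lin hy0 hy1) ht0
    _ = (3 * Real.sqrt 3 / π) * Real.tanh x * y := by ring
end

section
/- Let |Ψ⟩ and |Φ⟩ be nonzero vectors in a finite-dimensional complex inner product space, with normalized versions |Ψ̃⟩ = |Ψ⟩/‖Ψ‖ and |Φ̃⟩ = |Φ⟩/‖Φ‖. Suppose there are constants R₁ ≥ R₂ > 0 and Θ ∈ [0, π/2) such that, writing Ψ and Φ in coordinates ψ(σ), φ(σ) over a basis indexed by σ with φ(σ) ≠ 0 for all σ, the ratios r(σ) = ψ(σ)/φ(σ) satisfy R₂ ≤ |r(σ)|² ≤ R₁ and |arg r(σ)| ≤ Θ for all σ. Then ‖ |Ψ̃⟩ - |Φ̃⟩ ‖² ≤ 2 - 2√(R₂/R₁)·cos(Θ). -/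
/-! Writing `ψ σ = r σ * φ σ`, one has `Re ⟪Ψ, Φ⟫ = ∑ σ, Re (r σ) ‖φ σ‖² ≥ √R₂ cos Θ ‖Φ‖²` and
`‖Ψ‖ ≤ √R₁ ‖Φ‖`, so the cosine `Re ⟪Ψ, Φ⟫ / (‖Ψ‖ ‖Φ‖)` of the angle between the two states is at
least `√(R₂ / R₁) cos Θ`, while `‖Ψ̃ - Φ̃‖² = 2 - 2` times that cosine. -/

open Real

section Normalize

variable {F : Type*} [NormedAddCommGroup F] [InnerProductSpace ℝ F]

-- Equality for nonzero `x`, `y`; a zero vector normalizes to `0` since `‖0‖⁻¹ = 0`.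
theorem norm_inv_smul_sub_inv_smul_sq_le (x y : F) :
    ‖‖x‖⁻¹ • x - ‖y‖⁻¹ • y‖ ^ 2 ≤ 2 - 2 * (inner ℝ x y / (‖x‖ * ‖y‖)) := by
  have hunit : ∀ v : F, ‖‖v‖⁻¹ • v‖ ≤ 1 := fun v => by
    rw [norm_smul, norm_inv, norm_norm]
    exact inv_mul_le_one
  have hinner : inner ℝ (‖x‖⁻¹ • x) (‖y‖⁻¹ • y) = inner ℝ x y / (‖x‖ * ‖y‖) := by
    rw [real_inner_smul_left, real_inner_smul_right]
    ring
  rw [norm_sub_sq_real, hinner]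
  nlinarith [hunit x, hunit y, norm_nonneg (‖x‖⁻¹ • x), norm_nonneg (‖y‖⁻¹ • y)]

theorem div_le_inner_div_norm_mul_norm {x y : F} {a b : ℝ} (hx : x ≠ 0) (ha : 0 ≤ a)
    (hinner : a * ‖y‖ ^ 2 ≤ inner ℝ x y) (hnorm : ‖x‖ ≤ b * ‖y‖) :
    a / b ≤ inner ℝ x y / (‖x‖ * ‖y‖) := by
  have hx' : 0 < ‖x‖ := norm_pos_iff.mpr hx
  have hy : 0 < ‖y‖ := norm_pos_iff.mpr fun hy0 => hx'.not_ge (by simpa [hy0] using hnorm)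
  have hb : 0 < b := pos_of_mul_pos_left (hx'.trans_le hnorm) hy.le
  rw [div_le_div_iff₀ hb (mul_pos hx' hy)]
  calc a * (‖x‖ * ‖y‖) ≤ a * (b * ‖y‖ * ‖y‖) := by gcongr
    _ = b * (a * ‖y‖ ^ 2) := by ring
    _ ≤ b * inner ℝ x y := by gcongr
    _ = inner ℝ x y * b := mul_comm _ _

end Normalize

theorem Complex.mul_cos_le_re {z : ℂ} {s θ : ℝ} (hs : s ≤ ‖z‖) (harg : |z.arg| ≤ θ)
    (hθ : θ ≤ π / 2) : s * Real.cos θ ≤ z.re := by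
  have hcos : 0 ≤ Real.cos θ :=
    cos_nonneg_of_mem_Icc ⟨by linarith [abs_nonneg z.arg, pi_pos], hθ⟩
  have hcos_arg : Real.cos θ ≤ Real.cos z.arg := by
    rw [← cos_abs z.arg]
    exact cos_le_cos_of_nonneg_of_le_pi (abs_nonneg _) (by linarith [pi_pos]) harg
  calc s * Real.cos θ ≤ ‖z‖ * Real.cos z.arg := mul_le_mul hs hcos_arg hcos (norm_nonneg z)
    _ = z.re := Complex.norm_mul_cos_arg z

theorem Complex.real_inner_eq_re_div_mul_sq (z : ℂ) {w : ℂ} (hw : w ≠ 0) :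
    inner ℝ z w = (z / w).re * ‖w‖ ^ 2 := by
  have hw' : Complex.normSq w ≠ 0 := Complex.normSq_eq_zero.not.mpr hw
  rw [Complex.inner, Complex.div_re, ← Complex.normSq_eq_norm_sq]
  field_simp
  simp only [Complex.mul_re, Complex.conj_re, Complex.conj_im]
  ring

namespace EuclideanSpace

variable {𝕜 ι : Type*} [RCLike 𝕜] [Fintype ι]

theorem norm_le_sqrt_mul_norm {x y : EuclideanSpace 𝕜 ι} {c : ℝ}
    (h : ∀ i, ‖x i‖ ^ 2 ≤ c * ‖y i‖ ^ 2) : ‖x‖ ≤ √c * ‖y‖ := by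
  have hsq : ‖x‖ ^ 2 ≤ c * ‖y‖ ^ 2 := by
    rw [norm_sq_eq, norm_sq_eq, Finset.mul_sum]
    exact Finset.sum_le_sum fun i _ => h i
  calc ‖x‖ = √(‖x‖ ^ 2) := (sqrt_sq (norm_nonneg x)).symm
    _ ≤ √(c * ‖y‖ ^ 2) := sqrt_le_sqrt hsq
    _ = √c * ‖y‖ := by rw [sqrt_mul' c (sq_nonneg _), sqrt_sq (norm_nonneg y)]

theorem mul_norm_sq_le_real_inner {x y : EuclideanSpace 𝕜 ι} {a : ℝ}
    (h : ∀ i, a * ‖y i‖ ^ 2 ≤ inner ℝ (x i) (y i)) : a * ‖y‖ ^ 2 ≤ inner ℝ x y := by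
  rw [PiLp.inner_apply, norm_sq_eq, Finset.mul_sum]
  exact Finset.sum_le_sum fun i _ => h i

end EuclideanSpace

theorem normalized_state_diff_bound_general {ι : Type*} [Fintype ι]
    (Ψ Φ : EuclideanSpace ℂ ι) (R₁ R₂ Θ : ℝ)
    (hΨ : Ψ ≠ 0) (hΦ : ∀ σ, Φ σ ≠ 0)
    (hR₂ : 0 < R₂)
    (hΘ0 : 0 ≤ Θ) (hΘ1 : Θ < π / 2)
    (hlo : ∀ σ, R₂ ≤ ‖Ψ σ / Φ σ‖ ^ 2)
    (hhi : ∀ σ, ‖Ψ σ / Φ σ‖ ^ 2 ≤ R₁)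
    (harg : ∀ σ, |Complex.arg (Ψ σ / Φ σ)| ≤ Θ) :
    ‖‖Ψ‖⁻¹ • Ψ - ‖Φ‖⁻¹ • Φ‖ ^ 2 ≤ 2 - 2 * Real.sqrt (R₂ / R₁) * Real.cos Θ := by
  have hcos : 0 ≤ cos Θ := cos_nonneg_of_mem_Icc ⟨by linarith [pi_pos], hΘ1.le⟩
  have hre : ∀ σ, √R₂ * cos Θ ≤ (Ψ σ / Φ σ).re := fun σ =>
    Complex.mul_cos_le_re ((sqrt_le_sqrt (hlo σ)).trans_eq (sqrt_sq (norm_nonneg _)))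
      (harg σ) hΘ1.le
  have hinner : √R₂ * cos Θ * ‖Φ‖ ^ 2 ≤ inner ℝ Ψ Φ :=
    EuclideanSpace.mul_norm_sq_le_real_inner fun σ => by
      rw [Complex.real_inner_eq_re_div_mul_sq _ (hΦ σ)]
      exact mul_le_mul_of_nonneg_right (hre σ) (sq_nonneg _)
  have hnorm : ‖Ψ‖ ≤ √R₁ * ‖Φ‖ :=
    EuclideanSpace.norm_le_sqrt_mul_norm fun σ => by
      rw [← div_mul_cancel₀ (Ψ σ) (hΦ σ), norm_mul, mul_pow]
      exact mul_le_mul_of_nonneg_right (hhi σ) (sq_nonneg _)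
  calc ‖‖Ψ‖⁻¹ • Ψ - ‖Φ‖⁻¹ • Φ‖ ^ 2 ≤ 2 - 2 * (inner ℝ Ψ Φ / (‖Ψ‖ * ‖Φ‖)) :=
        norm_inv_smul_sub_inv_smul_sq_le Ψ Φ
    _ ≤ 2 - 2 * (√R₂ * cos Θ / √R₁) := by
        linarith [div_le_inner_div_norm_mul_norm hΨ (by positivity) hinner hnorm]
    _ = 2 - 2 * √(R₂ / R₁) * cos Θ := by rw [sqrt_div hR₂.le]; ring

theorem normalized_state_diff_bound {ι : Type*} [Fintype ι]
    (Ψ Φ : EuclideanSpace ℂ ι) (R₁ R₂ Θ : ℝ)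
    (hΨ : Ψ ≠ 0) (hΦ : ∀ σ, Φ σ ≠ 0)
    (hR : R₁ ≥ R₂) (hR₂ : 0 < R₂)
    (hΘ0 : 0 ≤ Θ) (hΘ1 : Θ < π / 2)
    (hlo : ∀ σ, R₂ ≤ ‖Ψ σ / Φ σ‖ ^ 2)
    (hhi : ∀ σ, ‖Ψ σ / Φ σ‖ ^ 2 ≤ R₁)
    (harg : ∀ σ, |Complex.arg (Ψ σ / Φ σ)| ≤ Θ) :
    ‖‖Ψ‖⁻¹ • Ψ - ‖Φ‖⁻¹ • Φ‖ ^ 2 ≤ 2 - 2 * Real.sqrt (R₂ / R₁) * Real.cos Θ :=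
  normalized_state_diff_bound_general Ψ Φ R₁ R₂ Θ hΨ hΦ hR₂ hΘ0 hΘ1 hlo hhi harg
end
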